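/- arXiv:2002.12159 — 7 statements merged into one kernel-verified Lean document; each statement's English description precedes it below -/
import Mathlib

section
/- For every n ≥ 2 and every collection of n distinct nonnegative real numbers v_1, …, v_n, if the values arrive in a uniformly random order and the wait-and-pick algorithm with cutoff m = ⌊n/2⌋ is applied (picking the value at the first prefix-maximum position after position m, and picking value 0 if no such position exists), then the expected value picked is at least (max_i v_i)/4. -/
/-!
Let `i₁` carry the largest value and `i₂` the second largest. If `i₂` arrives among the first
`m` (rejected) positions and `i₁` after them, then no position before `i₁`'s arrival beats the
rejected value `v i₂`, so the algorithm picks the maximum. Since the symmetric group is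
2-transitive, the arrival positions of `(i₂, i₁)` are uniformly distributed over ordered pairs
of distinct positions, so this happens with probability `m (n - m) / (n (n - 1)) ≥ 1/4` for
`m = ⌊n/2⌋`. All other orders contribute a nonnegative value.
-/

/-- The value picked by the wait-and-pick algorithm with cutoff `m`: reject the values at the
first `m` positions (0-indexed positions `0, …, m-1`), then pick the value at the first
prefix-maximum position among the remaining positions, picking `0` if none exists. -/
noncomputable def waitPick (n : ℕ) (v : Fin n → ℝ) (π : Equiv.Perm (Fin n)) (m : ℕ) : ℝ :=
  if h : (Finset.univ.filter (fun t : Fin n =>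
      m ≤ (t : ℕ) ∧ ∀ s : Fin n, s < t → v (π s) < v (π t))).Nonempty
  then v (π ((Finset.univ.filter (fun t : Fin n =>
      m ≤ (t : ℕ) ∧ ∀ s : Fin n, s < t → v (π s) < v (π t))).min' h))
  else 0

open Finset Equiv

theorem Equiv.Perm.exists_apply_eq_apply_eq {α : Type*} [Finite α] {a b a' b' : α}
    (hab : a ≠ b) (hab' : a' ≠ b') :
    ∃ τ : Perm α, τ a' = a ∧ τ b' = b := by
  obtain ⟨τ, hτ⟩ := Perm.exists_extending_pair ![a', b'] ![a, b]
    (by simp [Function.Injective, Fin.forall_fin_two, hab', hab'.symm])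
    (by simp [Function.Injective, Fin.forall_fin_two, hab, hab.symm])
  exact ⟨τ, hτ 0, hτ 1⟩

section
variable {α : Type*} [Fintype α] [DecidableEq α]

theorem card_perm_apply_eq_apply_eq_congr (x y : α) {a b a' b' : α} (hab : a ≠ b)
    (hab' : a' ≠ b') :
    #{π : Perm α | π a = x ∧ π b = y} = #{π : Perm α | π a' = x ∧ π b' = y} := by
  obtain ⟨τ, hτa, hτb⟩ := Perm.exists_apply_eq_apply_eq hab hab'
  exact card_equiv (Equiv.mulRight τ) (by simp [hτa, hτb])

theorem card_filter_perm_symm_mem (x y : α) {Q : Finset (α × α)} (hQ : Q ⊆ univ.offDiag)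
    {a b : α} (hab : a ≠ b) :
    #{π : Perm α | (π.symm x, π.symm y) ∈ Q} = #Q * #{π : Perm α | π a = x ∧ π b = y} := by
  refine (card_eq_sum_card_fiberwise (f := fun π : Perm α => (π.symm x, π.symm y))
    fun π hπ => (mem_filter.mp hπ).2).trans ?_
  rw [← smul_eq_mul, ← sum_const]
  refine sum_congr rfl fun p hp => ?_
  have hp' : p.1 ≠ p.2 := (mem_offDiag.mp (hQ hp)).2.2
  rw [filter_filter, ← card_perm_apply_eq_apply_eq_congr x y hp' hab]
  congr 1
  ext π
  simp only [mem_filter, mem_univ, true_and, Prod.ext_iff, Equiv.symm_apply_eq]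
  constructor
  · rintro ⟨-, h1, h2⟩; exact ⟨h1.symm, h2.symm⟩
  · rintro ⟨h1, h2⟩; exact ⟨by simpa [← h1, ← h2] using hp, h1.symm, h2.symm⟩

end

theorem card_perm_symm_lt_le_mul {n : ℕ} {x y : Fin n} (hxy : x ≠ y) (m : ℕ) :
    #{π : Perm (Fin n) | (π.symm x : ℕ) < m ∧ m ≤ (π.symm y : ℕ)} * (n * (n - 1)) =
      m * (n - m) * n.factorial := by
  set c := #{π : Perm (Fin n) | π x = x ∧ π y = y}
  have hall : n.factorial = n * (n - 1) * c := by
    have h := card_filter_perm_symm_mem x y (subset_refl univ.offDiag) hxy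
    rw [filter_true_of_mem fun π _ => by simpa using hxy, card_univ, Fintype.card_perm,
      Fintype.card_fin, offDiag_card, card_univ, Fintype.card_fin, ← Nat.mul_sub_one] at h
    exact h
  set L : Finset (Fin n) := {i | (i : ℕ) < m}
  set U : Finset (Fin n) := {i | m ≤ (i : ℕ)}
  have hLU : L ×ˢ U ⊆ univ.offDiag := fun p hp => by
    simp only [L, U, mem_product, mem_filter, mem_univ, true_and] at hp
    simp only [mem_offDiag, mem_univ, true_and, ne_eq, Fin.ext_iff]
    omega
  have hgood := card_filter_perm_symm_mem x y hLU hxy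
  simp only [L, U, mem_product, mem_filter, mem_univ, true_and] at hgood
  have hL : #L = min n m := Fin.card_filter_val_lt
  have hU : #U = n - m := by
    simp only [U, ← not_lt]
    rw [filter_not, card_sdiff_of_subset (filter_subset _ _), hL, card_univ, Fintype.card_fin]
    omega
  rw [hgood, hall, card_product, hL, hU]
  rcases le_total m n with h | h
  · rw [min_eq_right h]; ring
  · simp [Nat.sub_eq_zero_of_le h]

theorem mul_pred_le_four_mul_half_mul (n : ℕ) : n * (n - 1) ≤ 4 * (n / 2 * (n - n / 2)) := by
  obtain ⟨k, rfl | rfl⟩ := Nat.even_or_odd' n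
  · rw [show 2 * k / 2 = k by omega, show 2 * k - k = k by omega]
    calc 2 * k * (2 * k - 1) ≤ 2 * k * (2 * k) := Nat.mul_le_mul_left _ (Nat.sub_le _ _)
      _ = 4 * (k * k) := by ring
  · rw [show (2 * k + 1) / 2 = k by omega, show 2 * k + 1 - k = k + 1 by omega,
      Nat.add_sub_cancel]
    nlinarith

theorem factorial_le_four_mul_card_perm_symm_lt_half_le {n : ℕ} {x y : Fin n} (hxy : x ≠ y) :
    n.factorial ≤ 4 * #{π : Perm (Fin n) | (π.symm x : ℕ) < n / 2 ∧ n / 2 ≤ (π.symm y : ℕ)} := by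
  have hpos : 0 < n * (n - 1) := by
    have := Fin.val_ne_of_ne hxy
    exact Nat.mul_pos (by omega) (by omega)
  refine Nat.le_of_mul_le_mul_right ?_ hpos
  calc n.factorial * (n * (n - 1)) ≤ n.factorial * (4 * (n / 2 * (n - n / 2))) :=
        Nat.mul_le_mul_left _ (mul_pred_le_four_mul_half_mul n)
    _ = _ := by rw [mul_assoc, card_perm_symm_lt_le_mul hxy]; ring

theorem waitPick_nonneg {n : ℕ} {v : Fin n → ℝ} (hv : ∀ i, 0 ≤ v i) (π : Perm (Fin n)) (m : ℕ) :
    0 ≤ waitPick n v π m := by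
  unfold waitPick
  split
  exacts [hv _, le_rfl]

theorem waitPick_eq_of_symm_lt_le {n m : ℕ} {v : Fin n → ℝ} {π : Perm (Fin n)} {i₁ i₂ : Fin n}
    (hmax : ∀ j ≠ i₁, v j < v i₁) (hsecond : ∀ j ≠ i₁, v j ≤ v i₂)
    (h₂ : (π.symm i₂ : ℕ) < m) (h₁ : m ≤ (π.symm i₁ : ℕ)) :
    waitPick n v π m = v i₁ := by
  unfold waitPick
  set F : Finset (Fin n) := {t | m ≤ (t : ℕ) ∧ ∀ s : Fin n, s < t → v (π s) < v (π t)}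
  have hmem : π.symm i₁ ∈ F := by
    simp only [F, mem_filter, mem_univ, true_and, apply_symm_apply]
    refine ⟨h₁, fun s hs => hmax _ fun h => hs.ne ?_⟩
    rw [← h, symm_apply_apply]
  have hunique : ∀ t ∈ F, t = π.symm i₁ := by
    intro t ht
    simp only [F, mem_filter, mem_univ, true_and] at ht
    by_contra hne
    have hbefore := ht.2 (π.symm i₂) (by rw [Fin.lt_def]; omega)
    rw [apply_symm_apply] at hbefore
    exact (hsecond (π t) fun h => hne (by rw [← h, symm_apply_apply])).not_gt hbefore
  have hne : F.Nonempty := ⟨_, hmem⟩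
  rw [dif_pos hne, hunique _ (min'_mem _ _), apply_symm_apply]

/-- For `n ≥ 2` distinct nonnegative values arriving in uniformly random order, the
wait-and-pick algorithm with cutoff `m = ⌊n/2⌋` has expected value at least `(max_i v_i)/4`. -/
theorem fiftyPercent_algorithm (n : ℕ) (hn : 2 ≤ n) (v : Fin n → ℝ)
    (hinj : Function.Injective v) (hnonneg : ∀ i, 0 ≤ v i) :
    Finset.univ.sup' ⟨⟨0, by omega⟩, Finset.mem_univ _⟩ v / 4 ≤
      (∑ π : Equiv.Perm (Fin n), waitPick n v π (n / 2)) / (Nat.factorial n : ℝ) := by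
  obtain ⟨i₁, -, hsup⟩ := univ.exists_mem_eq_sup' ⟨⟨0, by omega⟩, mem_univ _⟩ v
  have hmax : ∀ j ≠ i₁, v j < v i₁ := fun j hj =>
    (hsup ▸ le_sup' v (mem_univ j)).lt_of_ne (hinj.ne hj)
  have : Nontrivial (Fin n) := Fin.nontrivial_iff_two_le.mpr hn
  obtain ⟨j, hj⟩ := exists_ne i₁
  obtain ⟨i₂, hi₂, hsecond⟩ := (univ.erase i₁).exists_max_image v ⟨j, by simpa using hj⟩
  set S : Finset (Perm (Fin n)) := {π | (π.symm i₂ : ℕ) < n / 2 ∧ n / 2 ≤ (π.symm i₁ : ℕ)}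
  have hpick : ∀ π ∈ S, waitPick n v π (n / 2) = v i₁ := fun π hπ =>
    waitPick_eq_of_symm_lt_le hmax (fun j hj => hsecond j (by simpa using hj))
      (mem_filter.mp hπ).2.1 (mem_filter.mp hπ).2.2
  have hcard : (n.factorial : ℝ) ≤ 4 * #S := by
    exact_mod_cast factorial_le_four_mul_card_perm_symm_lt_half_le (ne_of_mem_erase hi₂)
  rw [hsup, div_le_div_iff₀ four_pos (by positivity)]
  calc v i₁ * n.factorial ≤ v i₁ * (4 * #S) := by
        gcongr
        exact hnonneg i₁
    _ = (∑ π ∈ S, waitPick n v π (n / 2)) * 4 := by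
        rw [sum_congr rfl hpick, sum_const, nsmul_eq_mul]; ring
    _ ≤ (∑ π, waitPick n v π (n / 2)) * 4 := by
        gcongr ?_ * 4
        exact sum_le_sum_of_subset_of_nonneg (subset_univ S)
          fun π _ _ => waitPick_nonneg hnonneg π _
end

section
/- Fix n ≥ 2, distinct real values v_1, …, v_n, an integer 1 ≤ m ≤ n−1, and any permutation π of {1, …, n}. If the position at which the maximum value arrives is greater than m and the position at which the second-largest value arrives is at most m, then the wait-and-pick algorithm with cutoff m picks the maximum value. -/
section PrefixMax

variable {n : ℕ} {α : Type*} [Preorder α]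

def IsPrefixMax (a : Fin n → α) (t : Fin n) : Prop :=
  ∀ s, s < t → a s < a t

theorem isPrefixMax_of_forall_ne_lt {a : Fin n → α} {t : Fin n} (h : ∀ s, s ≠ t → a s < a t) :
    IsPrefixMax a t :=
  fun s hs => h s hs.ne

theorem IsPrefixMax.not_le_of_lt {a : Fin n → α} {s t : Fin n} (ht : IsPrefixMax a t)
    (hst : s < t) : ¬ a t ≤ a s :=
  (ht s hst).not_ge

end PrefixMax

theorem waitPick_eq_of_isLeast {n : ℕ} {v : Fin n → ℝ} {π : Equiv.Perm (Fin n)} {m : ℕ}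
    {T : Fin n} (hT : IsLeast {t : Fin n | m ≤ (t : ℕ) ∧ IsPrefixMax (v ∘ π) t} T) :
    waitPick n v π m = v (π T) := by
  set S := Finset.univ.filter (fun t : Fin n =>
    m ≤ (t : ℕ) ∧ ∀ s : Fin n, s < t → v (π s) < v (π t))
  have hS : (S : Set (Fin n)) = {t : Fin n | m ≤ (t : ℕ) ∧ IsPrefixMax (v ∘ π) t} := by
    ext t
    simp [S, IsPrefixMax]
  have hne : S.Nonempty := ⟨T, by simpa [← Finset.mem_coe, hS] using hT.1⟩
  have hmin : IsLeast {t : Fin n | m ≤ (t : ℕ) ∧ IsPrefixMax (v ∘ π) t} (S.min' hne) :=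
    hS ▸ S.isLeast_min' hne
  rw [waitPick, dif_pos hne, hmin.unique hT]

theorem waitPick_picks_max_general (n : ℕ) (v : Fin n → ℝ)
    (hinj : Function.Injective v)
    (m : ℕ) (π : Equiv.Perm (Fin n))
    (imax isec : Fin n) (hmax : ∀ k, v k ≤ v imax)
    (hsec : ∀ k, k ≠ imax → v k ≤ v isec)
    (hpos_max : m ≤ ((π.symm imax : Fin n) : ℕ))
    (hpos_sec : ((π.symm isec : Fin n) : ℕ) < m) :
    waitPick n v π m = v imax := by
  have hmax_prefix : IsPrefixMax (v ∘ π) (π.symm imax) :=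
    isPrefixMax_of_forall_ne_lt fun s hs => by
      have hsne : π s ≠ imax := fun h => hs (π.eq_symm_apply.mpr h)
      simpa using (hmax (π s)).lt_of_ne (hinj.ne hsne)
  have hleast : ∀ t : Fin n, m ≤ (t : ℕ) → IsPrefixMax (v ∘ π) t → π.symm imax ≤ t := by
    intro t htm ht
    by_contra! hlt
    have hsec_le : (v ∘ π) t ≤ (v ∘ π) (π.symm isec) := by
      simpa using hsec (π t) fun h => hlt.ne (π.eq_symm_apply.mpr h)
    exact ht.not_le_of_lt (Fin.lt_def.mpr (hpos_sec.trans_le htm)) hsec_le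
  rw [waitPick_eq_of_isLeast ⟨⟨hpos_max, hmax_prefix⟩, fun t ht => hleast t ht.1 ht.2⟩,
    π.apply_symm_apply]

/-- If the maximum value arrives at a (1-indexed) position `> m` (i.e. 0-indexed position `≥ m`)
and the second-largest value arrives at a position `≤ m` (0-indexed position `< m`), then the
wait-and-pick algorithm with cutoff `m` picks the maximum value. -/
theorem waitPick_picks_max (n : ℕ) (hn : 2 ≤ n) (v : Fin n → ℝ)
    (hinj : Function.Injective v)
    (m : ℕ) (hm1 : 1 ≤ m) (hm2 : m ≤ n - 1) (π : Equiv.Perm (Fin n))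
    (imax isec : Fin n) (hmax : ∀ k, v k ≤ v imax)
    (hne : isec ≠ imax) (hsec : ∀ k, k ≠ imax → v k ≤ v isec)
    (hpos_max : m ≤ ((π.symm imax : Fin n) : ℕ))
    (hpos_sec : ((π.symm isec : Fin n) : ℕ) < m) :
    waitPick n v π m = v imax :=
  waitPick_picks_max_general n v hinj m π imax isec hmax hsec hpos_max hpos_sec
end

section
/- With m_n = ⌈n/e⌉ and H_k = Σ_{j=1}^{k} 1/j the k-th harmonic number, the success probability of the wait-and-pick rule with cutoff m_n, namely (m_n/n)(H_{n−1} − H_{m_n−1}), converges to 1/e as n → ∞. -/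
/-!
Since `H_k = log k + γ + o(1)`, the difference `H_{n-1} - H_{m-1}` is `log (n / m) + o(1)` as soon
as both `n` and `m` tend to infinity. Hence if `m / n → c > 0`, the success probability tends to
`c log (1 / c)`, which equals `1 / e` for `c = 1 / e`; and `⌈n / e⌉ / n → 1 / e`.
-/

open Filter Real Topology

noncomputable def harm (k : ℕ) : ℝ := ∑ j ∈ Finset.Icc 1 k, (1 : ℝ) / (j : ℝ)

noncomputable def waitPickProb (n m : ℕ) : ℝ := (m / n : ℝ) * (harm (n - 1) - harm (m - 1))

lemma harm_eq_harmonic (k : ℕ) : harm k = harmonic k := by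
  simp [harm, harmonic_eq_sum_Icc, one_div]

lemma tendsto_harm_pred_sub_log :
    Tendsto (fun k : ℕ => harm (k - 1) - log k) atTop (𝓝 eulerMascheroniConstant) := by
  refine (tendsto_harmonic_sub_log_add_one.comp (tendsto_sub_atTop_nat 1)).congr' ?_
  filter_upwards [eventually_ge_atTop 1] with k hk
  simp [harm_eq_harmonic, Nat.cast_sub hk]

lemma tendsto_harm_pred_sub_harm_pred_sub_log {ι : Type*} {l : Filter ι} {a b : ι → ℕ}
    (ha : Tendsto a l atTop) (hb : Tendsto b l atTop) :
    Tendsto (fun i => harm (a i - 1) - harm (b i - 1) - log (a i / b i)) l (𝓝 0) := by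
  have h := (tendsto_harm_pred_sub_log.comp ha).sub (tendsto_harm_pred_sub_log.comp hb)
  rw [sub_self] at h
  refine h.congr' ?_
  filter_upwards [ha.eventually_ne_atTop 0, hb.eventually_ne_atTop 0] with i hai hbi
  rw [log_div (by exact_mod_cast hai) (by exact_mod_cast hbi)]
  simp only [Function.comp_apply]
  ring

lemma tendsto_waitPickProb {m : ℕ → ℕ} {c : ℝ} (hc : 0 < c)
    (hm : Tendsto (fun n => (m n / n : ℝ)) atTop (𝓝 c)) :
    Tendsto (fun n => waitPickProb n (m n)) atTop (𝓝 (-c * log c)) := by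
  have hm_atTop : Tendsto m atTop atTop := by
    refine tendsto_natCast_atTop_iff.mp
      ((hm.pos_mul_atTop hc tendsto_natCast_atTop_atTop).congr' ?_)
    filter_upwards [eventually_ne_atTop 0] with n hn
    field_simp
  have hdiff := tendsto_harm_pred_sub_harm_pred_sub_log tendsto_id hm_atTop
  have hlog := (continuousAt_log hc.ne').tendsto.comp hm
  rw [show -c * log c = c * (0 - log c) by ring]
  refine (hm.mul (hdiff.sub hlog)).congr fun n => ?_
  have hflip : log (n / m n : ℝ) = -log (m n / n : ℝ) := by rw [← log_inv, inv_div]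
  simp only [waitPickProb, Function.comp_apply, id, hflip]
  ring

lemma tendsto_ceil_div_exp_one_div :
    Tendsto (fun n : ℕ => (⌈(n : ℝ) / exp 1⌉₊ / n : ℝ)) atTop (𝓝 (exp 1)⁻¹) := by
  simpa only [div_eq_inv_mul _ (exp 1), Function.comp_def] using
    (tendsto_nat_ceil_mul_div_atTop (inv_nonneg.mpr (exp_pos 1).le)).comp
      tendsto_natCast_atTop_atTop

/-- With `m_n = ⌈n/e⌉`, the success probability `(m_n/n)(H_{n-1} - H_{m_n - 1})` of the
wait-and-pick rule with cutoff `m_n` converges to `1/e` as `n → ∞`. -/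
theorem waitPick_cutoff_n_over_e_tendsto_inv_e :
    Filter.Tendsto
      (fun n : ℕ =>
        ((⌈(n : ℝ) / Real.exp 1⌉₊ : ℝ) / (n : ℝ)) *
          (harm (n - 1) - harm (⌈(n : ℝ) / Real.exp 1⌉₊ - 1)))
      Filter.atTop (nhds (Real.exp 1)⁻¹) := by
  have h := tendsto_waitPickProb (inv_pos.mpr (exp_pos 1)) tendsto_ceil_div_exp_one_div
  rwa [log_inv, log_exp, neg_mul_neg, mul_one] at h
end

section
/- Let G be a bipartite graph between a set U of n agents and a set W of items, with nonnegative edge weights v_{ij}. For a subset T ⊆ U, let val(T) denote the maximum total weight of a matching in the subgraph induced on T ∪ W. Then for every 0 ≤ i ≤ n, if T is a uniformly random subset of U of size i, the expected value E[val(T)] is at least (i/n) · val(U). -/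
/-! Fix a maximum-weight matching `f` of all agents and let `w j` be the weight of the edge it
assigns to agent `j`. Restricting `f` to `T` is a matching of `T`, so `val T ≥ ∑ j ∈ T, w j`;
averaging the right-hand side over the `i`-subsets `T` gives `(i / n) ∑ j, w j = (i / n) val U`,
since each agent lies in a fraction `i / n` of them. -/

/-- The maximum total weight `val(T)` of a matching in the bipartite graph between the agents in
`T` and the items `W`, where matchings are encoded as functions `f : U → Option W` assigning to
each agent at most one item, with agents outside `T` getting nothing, and distinct agents
getting distinct items. -/
noncomputable def matchingVal (U W : Type*) [Fintype U] [Fintype W] [DecidableEq U]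
    [DecidableEq W] (v : U → W → ℝ) (T : Finset U) : ℝ :=
  (Finset.univ.filter (fun f : U → Option W =>
      (∀ i, i ∉ T → f i = none) ∧ ∀ i j : U, i ≠ j → f i ≠ none → f i ≠ f j)).sup'
    ⟨fun _ => none, by simp⟩
    (fun f => ∑ i ∈ T, (f i).elim 0 (v i))

open Finset

theorem Finset.sum_powersetCard_sum {α M : Type*} [DecidableEq α] [AddCommMonoid M]
    (s : Finset α) {k : ℕ} (hk : 1 ≤ k) (w : α → M) :
    ∑ T ∈ s.powersetCard k, ∑ j ∈ T, w j = (#s - 1).choose (k - 1) • ∑ j ∈ s, w j := by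
  rw [sum_comm' (t' := s) (s' := fun j => (s.powersetCard k).filter ({j} ⊆ ·)), smul_sum]
  · refine sum_congr rfl fun j hj => ?_
    rw [sum_const, card_filter_powersetCard_subset _ _ _ (singleton_subset_iff.2 hj)
      (by simpa using hk), card_singleton]
  · intro T j
    simp only [mem_filter, mem_powersetCard, singleton_subset_iff]
    exact ⟨fun ⟨⟨hTs, hT⟩, hj⟩ => ⟨⟨⟨hTs, hT⟩, hj⟩, hTs hj⟩, fun ⟨h, _⟩ => h⟩

theorem Finset.div_card_mul_sum_eq_sum_powersetCard_sum_div_choose {α 𝕜 : Type*}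
    [DecidableEq α] [Field 𝕜] [CharZero 𝕜] (s : Finset α) {k : ℕ} (hk : k ≤ #s) (w : α → 𝕜) :
    (k / #s : 𝕜) * ∑ j ∈ s, w j =
      (∑ T ∈ s.powersetCard k, ∑ j ∈ T, w j) / ((#s).choose k : 𝕜) := by
  obtain rfl | hk1 := Nat.eq_zero_or_pos k
  · simp
  obtain ⟨n, hn⟩ : ∃ n, #s = n + 1 := ⟨#s - 1, by omega⟩
  obtain ⟨m, rfl⟩ : ∃ m, k = m + 1 := ⟨k - 1, by omega⟩
  have hchoose : ((n + 1).choose (m + 1) : 𝕜) * (m + 1) = (n + 1) * n.choose m := by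
    exact_mod_cast (Nat.add_one_mul_choose_eq n m).symm
  have hpos : ((n + 1).choose (m + 1) : 𝕜) ≠ 0 := by
    exact_mod_cast (Nat.choose_pos (by omega)).ne'
  rw [sum_powersetCard_sum s hk1, nsmul_eq_mul, hn, eq_div_iff hpos]
  push_cast
  field_simp
  linear_combination (∑ j ∈ s, w j) * hchoose

section Matching

variable {U W : Type*} [Fintype U] [Fintype W] [DecidableEq U] [DecidableEq W]

theorem exists_matching_sum_eq_matchingVal (v : U → W → ℝ) (T : Finset U) :
    ∃ f : U → Option W, (∀ i j, i ≠ j → f i ≠ none → f i ≠ f j) ∧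
      ∑ i ∈ T, (f i).elim 0 (v i) = matchingVal U W v T := by
  obtain ⟨f, hf, hval⟩ := exists_mem_eq_sup' (s := univ.filter fun f : U → Option W =>
      (∀ i, i ∉ T → f i = none) ∧ ∀ i j : U, i ≠ j → f i ≠ none → f i ≠ f j)
    ⟨fun _ => none, by simp⟩ fun f => ∑ i ∈ T, (f i).elim 0 (v i)
  exact ⟨f, (mem_filter.1 hf).2.2, hval.symm⟩

theorem sum_le_matchingVal (v : U → W → ℝ) (T : Finset U) {f : U → Option W}
    (hf : ∀ i j, i ≠ j → f i ≠ none → f i ≠ f j) :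
    ∑ i ∈ T, (f i).elim 0 (v i) ≤ matchingVal U W v T := by
  set g : U → Option W := fun i => if i ∈ T then f i else none
  have hg : g ∈ univ.filter fun f : U → Option W =>
      (∀ i, i ∉ T → f i = none) ∧ ∀ i j : U, i ≠ j → f i ≠ none → f i ≠ f j := by
    refine mem_filter.2 ⟨mem_univ _, fun i hi => if_neg hi, fun i j hij hi => ?_⟩
    by_cases hiT : i ∈ T <;> by_cases hjT : j ∈ T <;> simp_all [g]
  calc ∑ i ∈ T, (f i).elim 0 (v i) = ∑ i ∈ T, (g i).elim 0 (v i) :=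
        sum_congr rfl fun i hi => by simp [g, hi]
    _ ≤ matchingVal U W v T := le_sup' (fun f => ∑ i ∈ T, (f i).elim 0 (v i)) hg

end Matching

theorem expected_matching_val_random_subset_general (U W : Type*) [Fintype U] [Fintype W]
    [DecidableEq U] [DecidableEq W] (v : U → W → ℝ)
    (i : ℕ) (hi : i ≤ Fintype.card U) :
    ((i : ℝ) / (Fintype.card U : ℝ)) * matchingVal U W v Finset.univ ≤
      (∑ T ∈ Finset.powersetCard i (Finset.univ : Finset U), matchingVal U W v T) /
        ((Fintype.card U).choose i : ℝ) := by
  obtain ⟨f, hf, hval⟩ := exists_matching_sum_eq_matchingVal v (univ : Finset U)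
  rw [← hval, ← card_univ, div_card_mul_sum_eq_sum_powersetCard_sum_div_choose _ hi]
  gcongr with T
  exact sum_le_matchingVal v T hf

/-- For a bipartite graph on `n` agents and items `W` with nonnegative edge weights, and any
`0 ≤ i ≤ n`, a uniformly random subset `T` of agents of size `i` satisfies
`E[val(T)] ≥ (i/n) · val(U)`. -/
theorem expected_matching_val_random_subset (U W : Type*) [Fintype U] [Fintype W]
    [DecidableEq U] [DecidableEq W] (v : U → W → ℝ) (hv : ∀ i j, 0 ≤ v i j)
    (i : ℕ) (hi : i ≤ Fintype.card U) :
    ((i : ℝ) / (Fintype.card U : ℝ)) * matchingVal U W v Finset.univ ≤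
      (∑ T ∈ Finset.powersetCard i (Finset.univ : Finset U), matchingVal U W v T) /
        ((Fintype.card U).choose i : ℝ) :=
  expected_matching_val_random_subset_general U W v i hi
end

section
/- Let s : I → (0, 1] be the sizes of a finite nonempty set of items, and suppose the items are partitioned into B nonempty bins such that for every two distinct bins, the total size of items in those two bins exceeds 1. Then B ≤ ⌈2 · Σ_{i∈I} s_i⌉. (This is the key invariant showing the Best Fit bin-packing algorithm uses at most ⌈2 Σ_i s_i⌉ bins, hence at most twice the optimal number of bins.) -/
/-!
Every bin has positive load, and since two bins of load at most `1/2` would together hold at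
most `1`, every bin other than one of least load holds more than `1/2`. Hence the total size,
which is at least the sum of the loads, exceeds `(B - 1) / 2`.
-/

open Finset

theorem Finset.sum_sum_le_sum_of_pairwise_disjoint {ι α M : Type*} [Fintype ι] [Fintype α]
    [AddCommMonoid M] [PartialOrder M] [IsOrderedAddMonoid M] {t : ι → Finset α} {f : α → M}
    (hdisj : ∀ j k, j ≠ k → Disjoint (t j) (t k)) (hf : ∀ a, 0 ≤ f a) :
    ∑ j, ∑ a ∈ t j, f a ≤ ∑ a, f a := by
  classical
  rw [← sum_biUnion fun j _ k _ hjk => hdisj j k hjk]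
  exact sum_le_univ_sum_of_nonneg hf

theorem card_sub_one_lt_two_mul_sum {ι K : Type*} [Fintype ι] [Field K] [LinearOrder K]
    [IsStrictOrderedRing K] (L : ι → K) (hpos : ∀ j, 0 < L j)
    (hpair : ∀ j k, j ≠ k → 1 < L j + L k) :
    (Fintype.card ι : K) - 1 < 2 * ∑ j, L j := by
  classical
  cases isEmpty_or_nonempty ι
  · simp
  obtain ⟨j₀, hmin⟩ := Finite.exists_min L
  have hhalf : ∀ k ∈ univ.erase j₀, 1 / 2 ≤ L k := fun k hk => by
    have := hpair j₀ k (ne_of_mem_erase hk).symm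
    linarith [hmin k]
  have hrest : ((Fintype.card ι - 1 : ℕ) : K) * (1 / 2) ≤ ∑ k ∈ univ.erase j₀, L k := by
    simpa [card_erase_of_mem (mem_univ j₀), nsmul_eq_mul] using card_nsmul_le_sum _ L _ hhalf
  rw [← add_sum_erase univ L (mem_univ j₀)]
  rw [Nat.cast_sub Fintype.card_pos, Nat.cast_one] at hrest
  linarith [hpos j₀]

theorem Nat.le_ceil_of_sub_one_lt {K : Type*} [Field K] [LinearOrder K] [IsStrictOrderedRing K]
    [FloorSemiring K] {n : ℕ} {x : K} (h : (n : K) - 1 < x) : n ≤ ⌈x⌉₊ := by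
  have : (n : K) < ⌈x⌉₊ + 1 := by linarith [Nat.le_ceil x]
  exact Nat.lt_add_one_iff.mp (by exact_mod_cast this)

theorem bins_le_ceil_two_mul_total_general (I : Type*) [Fintype I]
    (s : I → ℝ) (hs : ∀ i, 0 < s i ∧ s i ≤ 1)
    (B : ℕ) (bins : Fin B → Finset I)
    (hdisj : ∀ j k, j ≠ k → Disjoint (bins j) (bins k))
    (hne : ∀ j, (bins j).Nonempty)
    (hpair : ∀ j k, j ≠ k → 1 < (∑ i ∈ bins j, s i) + (∑ i ∈ bins k, s i)) :
    B ≤ ⌈2 * ∑ i : I, s i⌉₊ := by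
  have hloads := card_sub_one_lt_two_mul_sum (fun j => ∑ i ∈ bins j, s i)
    (fun j => sum_pos (fun i _ => (hs i).1) (hne j)) hpair
  have htotal := sum_sum_le_sum_of_pairwise_disjoint hdisj fun i => (hs i).1.le
  rw [Fintype.card_fin] at hloads
  exact Nat.le_ceil_of_sub_one_lt (by linarith)

/-- If a finite nonempty set of items with sizes in `(0,1]` is partitioned into `B` nonempty
bins (each of total size at most 1) such that the total size of every two distinct bins exceeds
`1`, then `B ≤ ⌈2 · Σ_i s_i⌉`. -/
theorem bins_le_ceil_two_mul_total (I : Type*) [Fintype I] [Nonempty I] [DecidableEq I]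
    (s : I → ℝ) (hs : ∀ i, 0 < s i ∧ s i ≤ 1)
    (B : ℕ) (bins : Fin B → Finset I)
    (hdisj : ∀ j k, j ≠ k → Disjoint (bins j) (bins k))
    (hcover : ∀ i : I, ∃ j, i ∈ bins j)
    (hne : ∀ j, (bins j).Nonempty)
    (hcap : ∀ j, ∑ i ∈ bins j, s i ≤ 1)
    (hpair : ∀ j k, j ≠ k → 1 < (∑ i ∈ bins j, s i) + (∑ i ∈ bins k, s i)) :
    B ≤ ⌈2 * ∑ i : I, s i⌉₊ :=
  bins_le_ceil_two_mul_total_general I s hs B bins hdisj hne hpair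
end

section
/- Let G be a finite graph, let M and M' be matchings in G with |M'| = |M| + k for some k ≥ 1. Then the symmetric difference M △ M' contains at least k pairwise vertex-disjoint M-augmenting paths (paths whose edges alternate between M' \ M and M \ M', beginning and ending with edges of M' at vertices unmatched by M), and the total number of edges in these paths is at most |M| + |M'|. -/
/-!
Start at a vertex `v` that is covered by `M'` but not by `M`; one exists because `M'` covers
`2|M'| > 2|M|` vertices. Following the edges of `M' \ M` and `M \ M'` alternately from `v` traces
a path `P` such that every edge of `M ∪ M'` at a vertex of `P` lies on `P`. If `P` has odd
length it is augmenting and carries one more edge of `M'` than of `M`; otherwise it carries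
equally many. Deleting the edges of `P` from both matchings therefore lowers `|M'| - |M|` by one,
respectively zero, and leaves matchings none of whose edges touches `P`, so induction on `|M'|`
supplies the remaining paths, vertex-disjoint from `P`.
-/

open Finset SimpleGraph

def Alternating {α : Type*} (A B : Finset α) : List α → Prop
  | [] => True
  | a :: l => a ∈ A ∧ Alternating B A l

namespace Alternating

variable {α : Type*} {A B : Finset α}

theorem mono {A' B' : Finset α} (hA : A ⊆ A') (hB : B ⊆ B') {l : List α}
    (h : Alternating A B l) : Alternating A' B' l := by
  induction l generalizing A B A' B' with
  | nil => trivial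
  | cons a l ih => exact ⟨hA h.1, ih hB hA h.2⟩

theorem mem_or_mem {l : List α} (h : Alternating A B l) {a : α} (ha : a ∈ l) :
    a ∈ A ∨ a ∈ B := by
  induction l generalizing A B with
  | nil => simp at ha
  | cons b l ih =>
    rcases List.mem_cons.mp ha with rfl | ha
    · exact .inl h.1
    · exact (ih h.2 ha).symm

theorem mem_symmDiff [DecidableEq α] {l : List α} (h : Alternating (B \ A) (A \ B) l) {a : α}
    (ha : a ∈ l) : a ∈ symmDiff A B := by
  rcases h.mem_or_mem ha with ha | ha <;> simp only [mem_sdiff] at ha <;>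
    simp [Finset.mem_symmDiff, ha]

theorem getElem_mem {l : List α} (h : Alternating A B l) (i : ℕ) (hi : i < l.length) :
    if i % 2 = 0 then l[i] ∈ A else l[i] ∈ B := by
  induction l generalizing A B i with
  | nil => simp at hi
  | cons a l ih =>
    cases i with
    | zero => simpa using h.1
    | succ i =>
      have := ih h.2 i (by simpa using hi)
      simp only [List.getElem_cons_succ]
      split_ifs at this ⊢ <;> first | assumption | omega

theorem card_inter_toFinset [DecidableEq α] {l : List α} (h : Alternating (A \ B) (B \ A) l)
    (hl : l.Nodup) :
    #(A ∩ l.toFinset) = (l.length + 1) / 2 ∧ #(B ∩ l.toFinset) = l.length / 2 := by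
  induction l generalizing A B with
  | nil => simp
  | cons a l ih =>
    obtain ⟨haA, haB⟩ := mem_sdiff.mp h.1
    have hal : a ∉ l.toFinset := by simpa using (List.nodup_cons.mp hl).1
    obtain ⟨hB, hA⟩ := ih h.2 (List.nodup_cons.mp hl).2
    rw [List.toFinset_cons, inter_insert_of_mem haA, inter_insert_of_notMem haB,
      card_insert_of_notMem fun h => hal (mem_inter.mp h).2, hA, hB]
    simp only [List.length_cons, and_true]
    omega

end Alternating

section Matchings

variable {V : Type*}

def IsMatching (M : Finset (Sym2 V)) : Prop :=
  ∀ e ∈ M, ∀ f ∈ M, e ≠ f → ∀ x, x ∈ e → x ∉ f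

namespace IsMatching

variable {M N : Finset (Sym2 V)}

theorem eq_of_mem (hM : IsMatching M) {e f : Sym2 V} (he : e ∈ M) (hf : f ∈ M) {x : V}
    (hxe : x ∈ e) (hxf : x ∈ f) : e = f :=
  by_contra fun hne => hM e he f hf hne x hxe hxf

theorem subset (hM : IsMatching M) (hNM : N ⊆ M) : IsMatching N :=
  fun e he f hf => hM e (hNM he) f (hNM hf)

theorem card_biUnion_toFinset [DecidableEq V] (hM : IsMatching M)
    (hdiag : ∀ e ∈ M, ¬e.IsDiag) : #(M.biUnion Sym2.toFinset) = 2 * #M := by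
  rw [card_biUnion, sum_congr rfl fun e he => Sym2.card_toFinset_of_not_isDiag e (hdiag e he),
    sum_const, smul_eq_mul, mul_comm]
  intro e he f hf hef
  exact disjoint_left.mpr fun x hxe hxf =>
    hM e he f hf hef x (Sym2.mem_toFinset.mp hxe) (Sym2.mem_toFinset.mp hxf)

end IsMatching

theorem card_biUnion_toFinset_le [DecidableEq V] (M : Finset (Sym2 V)) :
    #(M.biUnion Sym2.toFinset) ≤ 2 * #M := by
  refine card_biUnion_le.trans ?_
  rw [mul_comm, ← smul_eq_mul]
  refine sum_le_card_nsmul _ _ _ fun e _ => ?_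
  rw [Sym2.card_toFinset]
  split_ifs <;> omega

theorem exists_unmatched_of_card_lt [DecidableEq V] {M M' : Finset (Sym2 V)}
    (hM' : IsMatching M') (hdiag : ∀ e ∈ M', ¬e.IsDiag) (hlt : #M < #M') :
    ∃ v, (∀ e ∈ M, v ∉ e) ∧ ∃ e ∈ M', v ∈ e := by
  have hcard : #(M.biUnion Sym2.toFinset) < #(M'.biUnion Sym2.toFinset) := by
    rw [hM'.card_biUnion_toFinset hdiag]
    have := card_biUnion_toFinset_le M
    omega
  obtain ⟨v, hv', hv⟩ := exists_mem_notMem_of_card_lt_card hcard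
  simp only [mem_biUnion, Sym2.mem_toFinset, not_exists, not_and] at hv hv'
  exact ⟨v, hv, hv'⟩

/-- `S` is the vertex set of the alternating path traced so far and `y` the vertex it has just
reached along an edge of `M` (initially `S = ∅` and `y` is not covered by `M`). -/
structure IsFrontier (M M' : Finset (Sym2 V)) (S : Finset V) (y : V) : Prop where
  notMem : y ∉ S
  closed_right : ∀ e ∈ M', ∀ x ∈ S, x ∈ e → ∀ t ∈ e, t ∈ S
  closed_left : ∀ e ∈ M, ∀ x ∈ S, x ∈ e → ∀ t ∈ e, t ∈ S ∨ t = y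
  matched_into : ∀ e ∈ M, y ∈ e → ∃ x ∈ S, x ∈ e

namespace IsFrontier

variable {M M' : Finset (Sym2 V)} {S : Finset V} {y : V}

theorem empty (hy : ∀ e ∈ M, y ∉ e) : IsFrontier M M' ∅ y :=
  ⟨notMem_empty y, by simp, by simp, fun e he hye => absurd hye (hy e he)⟩

theorem of_mem_right (h : IsFrontier M M' S y) {e : Sym2 V} (he : e ∈ M') (hye : y ∈ e) :
    e ∉ M ∧ ∀ t ∈ e, t ∉ S := by
  have hS : ∀ t ∈ e, t ∉ S := fun t hte htS => h.notMem (h.closed_right e he t htS hte y hye)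
  refine ⟨fun heM => ?_, hS⟩
  obtain ⟨x, hxS, hxe⟩ := h.matched_into e heM hye
  exact hS x hxe hxS

theorem eq_or_meets_of_mem [DecidableEq V] (hM' : IsMatching M') (h : IsFrontier M M' S y)
    {e g : Sym2 V} (he : e ∈ M') (hye : y ∈ e) (hg : g ∈ M ∪ M') (hyg : y ∈ g) :
    g = e ∨ ∃ x ∈ S, x ∈ g := by
  rcases mem_union.mp hg with hg | hg
  · exact .inr (h.matched_into g hg hyg)
  · exact .inl (hM'.eq_of_mem hg he hyg hye)

theorem step [DecidableEq V] (hM : IsMatching M) (hM' : IsMatching M') (h : IsFrontier M M' S y)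
    {z y' : V} (he : s(y, z) ∈ M') (hf : s(z, y') ∈ M) (hyz : y ≠ z) (hzy' : z ≠ y') :
    IsFrontier M M' (insert y (insert z S)) y' := by
  obtain ⟨heM, heS⟩ := h.of_mem_right he (Sym2.mem_mk_left y z)
  have hzS : z ∉ S := heS z (Sym2.mem_mk_right y z)
  have hy'y : y' ≠ y := by
    rintro rfl
    exact heM (Sym2.eq_swap ▸ hf)
  have hy'S : y' ∉ S := fun hy'S => by
    rcases h.closed_left _ hf y' hy'S (Sym2.mem_mk_right z y') z (Sym2.mem_mk_left z y') with
      hzS' | rfl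
    exacts [hzS hzS', hyz rfl]
  refine ⟨by simp [hy'y, hzy'.symm, hy'S], ?_, ?_, ?_⟩
  · intro g hg x hx hxg t htg
    simp only [mem_insert] at hx ⊢
    rcases hx with rfl | rfl | hxS
    · rw [hM'.eq_of_mem hg he hxg (Sym2.mem_mk_left _ _), Sym2.mem_iff] at htg
      tauto
    · rw [hM'.eq_of_mem hg he hxg (Sym2.mem_mk_right _ _), Sym2.mem_iff] at htg
      tauto
    · exact .inr (.inr (h.closed_right g hg x hxS hxg t htg))
  · intro g hg x hx hxg t htg
    simp only [mem_insert] at hx ⊢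
    rcases hx with rfl | rfl | hxS
    · obtain ⟨s, hsS, hsg⟩ := h.matched_into g hg hxg
      rcases h.closed_left g hg s hsS hsg t htg with htS | rfl <;> tauto
    · rw [hM.eq_of_mem hg hf hxg (Sym2.mem_mk_left _ _), Sym2.mem_iff] at htg
      tauto
    · rcases h.closed_left g hg x hxS hxg t htg with htS | rfl <;> tauto
  · intro g hg hy'g
    rw [hM.eq_of_mem hg hf hy'g (Sym2.mem_mk_right _ _)]
    exact ⟨z, by simp, Sym2.mem_mk_left _ _⟩

end IsFrontier

section Tracing

variable [DecidableEq V] {G : SimpleGraph V} {M M' : Finset (Sym2 V)}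

structure IsClosedAlternating (M M' : Finset (Sym2 V)) (S : Finset V) {y w : V}
    (p : G.Walk y w) : Prop where
  isPath : p.IsPath
  support_notMem : ∀ x ∈ p.support, x ∉ S
  alternating : Alternating (M' \ M) (M \ M') p.edges
  closed : ∀ x ∈ p.support, ∀ e ∈ M ∪ M', x ∈ e → e ∈ p.edges ∨ ∃ s ∈ S, s ∈ e
  unmatched_end : p.length % 2 = 1 → ∀ e ∈ M, w ∉ e

namespace IsClosedAlternating

variable {S : Finset V}

theorem nil {y : V} (h : IsFrontier M M' S y) (hy : ∀ e ∈ M', y ∉ e) :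
    IsClosedAlternating M M' S (Walk.nil : G.Walk y y) := by
  refine ⟨.nil, by simpa using h.notMem, trivial, ?_, by simp⟩
  simp only [Walk.support_nil, List.mem_singleton, forall_eq]
  intro e he hye
  rcases mem_union.mp he with he | he
  · exact .inr (h.matched_into e he hye)
  · exact absurd hye (hy e he)

theorem single (hM' : IsMatching M') {y z : V} (h : IsFrontier M M' S y) (hadj : G.Adj y z)
    (he : s(y, z) ∈ M') (hz : ∀ e ∈ M, z ∉ e) :
    IsClosedAlternating M M' S (.cons hadj .nil) := by
  obtain ⟨heM, heS⟩ := h.of_mem_right he (Sym2.mem_mk_left y z)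
  refine ⟨by simp [hadj.ne], ?_, ⟨mem_sdiff.mpr ⟨he, heM⟩, trivial⟩, ?_,
    fun _ => by simpa using hz⟩
  · simpa [h.notMem] using heS z (Sym2.mem_mk_right y z)
  · simp only [Walk.support_cons, Walk.support_nil, List.mem_cons, forall_eq_or_imp,
      Walk.edges_cons, Walk.edges_nil]
    refine ⟨fun g hg hyg => ?_, fun g hg hzg => ?_, by simp⟩
    · rcases h.eq_or_meets_of_mem hM' he (Sym2.mem_mk_left y z) hg hyg with rfl | hS <;> simp [*]
    · rcases mem_union.mp hg with hg | hg
      · exact absurd hzg (hz g hg)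
      · simp [hM'.eq_of_mem hg he hzg (Sym2.mem_mk_right y z)]

theorem cons_cons (hM : IsMatching M) (hM' : IsMatching M') {y z y' w : V}
    (h : IsFrontier M M' S y) (hadj : G.Adj y z) (hadj' : G.Adj z y') (he : s(y, z) ∈ M')
    (hf : s(z, y') ∈ M) {p : G.Walk y' w}
    (hp : IsClosedAlternating M M' (insert y (insert z S)) p) :
    IsClosedAlternating M M' S (.cons hadj (.cons hadj' p)) := by
  obtain ⟨heM, heS⟩ := h.of_mem_right he (Sym2.mem_mk_left y z)
  have hfM' : s(z, y') ∉ M' := fun hfM' =>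
    heM (hM'.eq_of_mem hfM' he (Sym2.mem_mk_left z y') (Sym2.mem_mk_right y z) ▸ hf)
  have hyp : y ∉ p.support := fun hy => hp.support_notMem y hy (by simp)
  have hzp : z ∉ p.support := fun hz => hp.support_notMem z hz (by simp)
  have hmeets : ∀ g ∈ M ∪ M', ∀ x ∈ insert y (insert z S), x ∈ g →
      g = s(y, z) ∨ g = s(z, y') ∨ ∃ s ∈ S, s ∈ g := by
    intro g hg x hx hxg
    simp only [mem_insert] at hx
    rcases hx with rfl | rfl | hxS
    · rcases h.eq_or_meets_of_mem hM' he (Sym2.mem_mk_left x z) hg hxg with h | h <;> tauto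
    · rcases mem_union.mp hg with hg | hg
      · exact .inr (.inl (hM.eq_of_mem hg hf hxg (Sym2.mem_mk_left x y')))
      · exact .inl (hM'.eq_of_mem hg he hxg (Sym2.mem_mk_right y x))
    · exact .inr (.inr ⟨x, hxS, hxg⟩)
  refine ⟨?_, ?_, ⟨mem_sdiff.mpr ⟨he, heM⟩, mem_sdiff.mpr ⟨hf, hfM'⟩, hp.alternating⟩, ?_, ?_⟩
  · simp [Walk.cons_isPath_iff, hp.isPath, hyp, hzp, hadj.ne]
  · simp only [Walk.support_cons, List.mem_cons, forall_eq_or_imp]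
    exact ⟨h.notMem, heS z (Sym2.mem_mk_right y z),
      fun x hx hxS => hp.support_notMem x hx (by simp [hxS])⟩
  · intro x hx g hg hxg
    simp only [Walk.support_cons, List.mem_cons] at hx
    simp only [Walk.edges_cons, List.mem_cons]
    rcases hx with rfl | rfl | hx
    · rcases hmeets g hg x (by simp) hxg with h | h | h <;> tauto
    · rcases hmeets g hg x (by simp) hxg with h | h | h <;> tauto
    · rcases hp.closed x hx g hg hxg with h | ⟨s, hs, hsg⟩
      · tauto
      · rcases hmeets g hg s hs hsg with h | h | h <;> tauto
  · intro hodd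
    rw [Walk.length_cons, Walk.length_cons] at hodd
    exact hp.unmatched_end (by omega)

end IsClosedAlternating

theorem exists_isClosedAlternating (hMG : ∀ e ∈ M, e ∈ G.edgeSet)
    (hM'G : ∀ e ∈ M', e ∈ G.edgeSet) (hM : IsMatching M) (hM' : IsMatching M') {S : Finset V}
    {y : V} (h : IsFrontier M M' S y) :
    ∃ (w : V) (p : G.Walk y w), IsClosedAlternating M M' S p := by
  induction hn : #(M'.biUnion Sym2.toFinset \ S) using Nat.strong_induction_on
    generalizing S y with
  | _ n ih =>
  by_cases hy : ∃ e ∈ M', y ∈ e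
  swap
  · exact ⟨y, .nil, .nil h fun e he hye => hy ⟨e, he, hye⟩⟩
  obtain ⟨e, he, hye⟩ := hy
  obtain ⟨z, rfl⟩ := Sym2.mem_iff_exists.mp hye
  have hadj : G.Adj y z := G.mem_edgeSet.mp (hM'G _ he)
  by_cases hz : ∃ f ∈ M, z ∈ f
  swap
  · exact ⟨z, .cons hadj .nil, .single hM' h hadj he fun f hf hzf => hz ⟨f, hf, hzf⟩⟩
  obtain ⟨f, hf, hzf⟩ := hz
  obtain ⟨y', rfl⟩ := Sym2.mem_iff_exists.mp hzf
  have hadj' : G.Adj z y' := G.mem_edgeSet.mp (hMG _ hf)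
  have hlt : #(M'.biUnion Sym2.toFinset \ insert y (insert z S)) < n := by
    rw [← hn]
    refine card_lt_card ((ssubset_iff_of_subset (sdiff_subset_sdiff subset_rfl ?_)).mpr ?_)
    · exact (subset_insert z S).trans (subset_insert y _)
    · exact ⟨y, mem_sdiff.mpr ⟨mem_biUnion.mpr ⟨_, he, Sym2.mem_toFinset.mpr hye⟩, h.notMem⟩,
        by simp⟩
  obtain ⟨w, p, hp⟩ := ih _ hlt (h.step hM hM' he hf hadj.ne hadj'.ne) rfl
  exact ⟨w, _, .cons_cons hM hM' h hadj hadj' he hf hp⟩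

structure IsAugmentingPath (M M' : Finset (Sym2 V)) {u w : V} (p : G.Walk u w) : Prop where
  isPath : p.IsPath
  alternating : Alternating (M' \ M) (M \ M') p.edges
  odd_length : p.length % 2 = 1
  unmatched_start : ∀ e ∈ M, u ∉ e
  unmatched_end : ∀ e ∈ M, w ∉ e

theorem IsClosedAlternating.isAugmentingPath {v w : V} {P : G.Walk v w}
    (hP : IsClosedAlternating M M' ∅ P) (hv : ∀ e ∈ M, v ∉ e) (hodd : P.length % 2 = 1) :
    IsAugmentingPath M M' P :=
  ⟨hP.isPath, hP.alternating, hodd, hv, hP.unmatched_end hodd⟩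

theorem IsAugmentingPath.of_sdiff_edges {v w u x : V} {P : G.Walk v w}
    (hP : IsClosedAlternating M M' ∅ P) {q : G.Walk u x}
    (hq : IsAugmentingPath (M \ P.edges.toFinset) (M' \ P.edges.toFinset) q) :
    IsAugmentingPath M M' q ∧ q.support.Disjoint P.support := by
  set R := P.edges.toFinset
  have hdisj : q.support.Disjoint P.support := by
    intro t htq htP
    have hq_nil : ¬q.Nil := Walk.not_nil_iff_lt_length.mpr (by have := hq.odd_length; omega)
    obtain ⟨g, hgq, htg⟩ := (Walk.mem_support_iff_exists_mem_edges_of_not_nil hq_nil).mp htq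
    have hg : (g ∈ M ∨ g ∈ M') ∧ g ∉ R := by
      rcases hq.alternating.mem_or_mem hgq with hg | hg <;> simp only [mem_sdiff] at hg <;> tauto
    rcases hP.closed t htP g (mem_union.mpr hg.1) htg with hgP | ⟨s, hs, -⟩
    · exact hg.2 (List.mem_toFinset.mpr hgP)
    · exact notMem_empty s hs
  have hunmatched : ∀ t ∈ q.support, (∀ e ∈ M \ R, t ∉ e) → ∀ e ∈ M, t ∉ e := by
    intro t htq ht e he hte
    by_cases heR : e ∈ R
    · obtain ⟨t', rfl⟩ := Sym2.mem_iff_exists.mp hte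
      exact hdisj htq (P.fst_mem_support_of_mem_edges (List.mem_toFinset.mp heR))
    · exact ht e (mem_sdiff.mpr ⟨he, heR⟩) hte
  refine ⟨⟨hq.isPath, hq.alternating.mono ?_ ?_, hq.odd_length,
    hunmatched u q.start_mem_support hq.unmatched_start,
    hunmatched x q.end_mem_support hq.unmatched_end⟩, hdisj⟩ <;>
  · intro e
    simp only [mem_sdiff]
    tauto

theorem exists_augmentingPaths (hMG : ∀ e ∈ M, e ∈ G.edgeSet)
    (hM'G : ∀ e ∈ M', e ∈ G.edgeSet) (hM : IsMatching M) (hM' : IsMatching M') (k : ℕ)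
    (hcard : #M' = #M + k) :
    ∃ L : List (Σ u w, G.Walk u w), L.length = k ∧ (∀ p ∈ L, IsAugmentingPath M M' p.2.2) ∧
      L.Pairwise (fun p q => p.2.2.support.Disjoint q.2.2.support) ∧
      (L.map fun p => p.2.2.length).sum ≤ #M + #M' := by
  induction hn : #M' using Nat.strong_induction_on generalizing M M' k with
  | _ n ih =>
  cases k with
  | zero => exact ⟨[], rfl, by simp, .nil, by simp⟩
  | succ k =>
  obtain ⟨v, hv, e₀, he₀, hve₀⟩ := exists_unmatched_of_card_lt (M := M) hM'
    (fun e he => G.not_isDiag_of_mem_edgeSet (hM'G e he)) (by omega)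
  obtain ⟨w, P, hP⟩ :=
    exists_isClosedAlternating hMG hM'G hM hM' (IsFrontier.empty (M' := M') hv)
  have hcount := hP.alternating.card_inter_toFinset hP.isPath.isTrail.edges_nodup
  rw [P.length_edges] at hcount
  set R := P.edges.toFinset
  have he₀R : e₀ ∈ M' ∩ R := by
    rcases hP.closed v P.start_mem_support e₀ (mem_union_right _ he₀) hve₀ with
      he₀P | ⟨s, hs, -⟩
    · exact mem_inter.mpr ⟨he₀, List.mem_toFinset.mpr he₀P⟩
    · exact absurd hs (notMem_empty s)
  have hM'R := card_sdiff_add_card_inter M' R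
  have hMR := card_sdiff_add_card_inter M R
  have hR_pos := card_pos.mpr ⟨e₀, he₀R⟩
  have ih' := fun k => ih #(M' \ R) (by omega) (M := M \ R) (M' := M' \ R)
    (fun e he => hMG e (mem_sdiff.mp he).1) (fun e he => hM'G e (mem_sdiff.mp he).1)
    (hM.subset sdiff_subset) (hM'.subset sdiff_subset) k
  obtain heven | hodd := Nat.mod_two_eq_zero_or_one P.length
  · obtain ⟨L, hL, haug, hdisj, hsum⟩ := ih' (k + 1) (by omega) rfl
    exact ⟨L, hL, fun p hp => ((haug p hp).of_sdiff_edges hP).1, hdisj, by omega⟩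
  · obtain ⟨L, hL, haug, hdisj, hsum⟩ := ih' k (by omega) rfl
    refine ⟨⟨v, w, P⟩ :: L, by simp [hL], ?_, ?_, ?_⟩
    · exact List.forall_mem_cons.mpr
        ⟨hP.isAugmentingPath hv hodd, fun p hp => ((haug p hp).of_sdiff_edges hP).1⟩
    · exact List.pairwise_cons.mpr ⟨fun p hp => ((haug p hp).of_sdiff_edges hP).2.symm, hdisj⟩
    · simp only [List.map_cons, List.sum_cons]
      omega

end Tracing

end Matchings

theorem augmenting_paths_in_symmDiff_general {V : Type*} [DecidableEq V]
    (G : SimpleGraph V) (M M' : Finset (Sym2 V))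
    (hMG : ∀ e ∈ M, e ∈ G.edgeSet) (hM'G : ∀ e ∈ M', e ∈ G.edgeSet)
    (hM : ∀ e ∈ M, ∀ f ∈ M, e ≠ f → ∀ x, x ∈ e → x ∉ f)
    (hM' : ∀ e ∈ M', ∀ f ∈ M', e ≠ f → ∀ x, x ∈ e → x ∉ f)
    (k : ℕ) (hcard : M'.card = M.card + k) :
    ∃ (u w : Fin k → V) (p : ∀ j, G.Walk (u j) (w j)),
      (∀ j, (p j).IsPath) ∧
      (∀ j, ∀ e ∈ (p j).edges, e ∈ symmDiff M M') ∧
      (∀ j, (p j).length % 2 = 1) ∧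
      (∀ j, ∀ i, ∀ hi : i < (p j).edges.length,
        if i % 2 = 0 then (p j).edges.get ⟨i, hi⟩ ∈ M' \ M
        else (p j).edges.get ⟨i, hi⟩ ∈ M \ M') ∧
      (∀ j, ∀ e ∈ M, u j ∉ e ∧ w j ∉ e) ∧
      (∀ j j', j ≠ j' → ∀ x ∈ (p j).support, x ∉ (p j').support) ∧
      (∑ j, (p j).length) ≤ M.card + M'.card := by
  obtain ⟨L, rfl, haug, hdisj, hsum⟩ := exists_augmentingPaths hMG hM'G hM hM' k hcard
  have hL : ∀ j : Fin L.length, IsAugmentingPath M M' L[j].2.2 :=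
    fun j => haug _ (List.getElem_mem _)
  refine ⟨fun j => L[j].1, fun j => L[j].2.1, fun j => L[j].2.2, fun j => (hL j).isPath,
    fun j e he => (hL j).alternating.mem_symmDiff he, fun j => (hL j).odd_length,
    fun j => (hL j).alternating.getElem_mem,
    fun j e he => ⟨(hL j).unmatched_start e he, (hL j).unmatched_end e he⟩, ?_, ?_⟩
  · intro j j' hjj'
    rcases lt_or_gt_of_ne (Fin.val_ne_of_ne hjj') with hlt | hlt
    · exact List.pairwise_iff_getElem.mp hdisj _ _ _ _ hlt
    · exact (List.pairwise_iff_getElem.mp hdisj _ _ _ _ hlt).symm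
  · exact (Fin.sum_univ_fun_getElem L fun p => p.2.2.length).trans_le hsum

/-- Let `M` and `M'` be matchings (sets of pairwise vertex-disjoint edges) in a finite graph `G`
with `|M'| = |M| + k`, `k ≥ 1`.  Then the symmetric difference `M ∆ M'` contains at least `k`
pairwise vertex-disjoint `M`-augmenting paths — paths whose edges alternate between `M' \ M` and
`M \ M'`, beginning and ending with edges of `M'` (so of odd length), whose endpoints are
unmatched by `M` — and the total number of edges on these paths is at most `|M| + |M'|`. -/
theorem augmenting_paths_in_symmDiff {V : Type*} [Fintype V] [DecidableEq V]
    (G : SimpleGraph V) (M M' : Finset (Sym2 V))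
    (hMG : ∀ e ∈ M, e ∈ G.edgeSet) (hM'G : ∀ e ∈ M', e ∈ G.edgeSet)
    (hM : ∀ e ∈ M, ∀ f ∈ M, e ≠ f → ∀ x, x ∈ e → x ∉ f)
    (hM' : ∀ e ∈ M', ∀ f ∈ M', e ≠ f → ∀ x, x ∈ e → x ∉ f)
    (k : ℕ) (hk : 1 ≤ k) (hcard : M'.card = M.card + k) :
    ∃ (u w : Fin k → V) (p : ∀ j, G.Walk (u j) (w j)),
      (∀ j, (p j).IsPath) ∧
      (∀ j, ∀ e ∈ (p j).edges, e ∈ symmDiff M M') ∧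
      (∀ j, (p j).length % 2 = 1) ∧
      (∀ j, ∀ i, ∀ hi : i < (p j).edges.length,
        if i % 2 = 0 then (p j).edges.get ⟨i, hi⟩ ∈ M' \ M
        else (p j).edges.get ⟨i, hi⟩ ∈ M \ M') ∧
      (∀ j, ∀ e ∈ M, u j ∉ e ∧ w j ∉ e) ∧
      (∀ j j', j ≠ j' → ∀ x ∈ (p j).support, x ∉ (p j').support) ∧
      (∑ j, (p j).length) ≤ M.card + M'.card :=
  augmenting_paths_in_symmDiff_general G M M' hMG hM'G hM hM' k hcard
end

section
/- Let (V, d) be a finite metric space and R ⊆ V a nonempty set of terminals. Define the cost of a tree whose vertex set is a subset of V as the sum of d(u, w) over its edges. Then the minimum cost of a spanning tree of the complete graph on R (with edge costs d) is at most twice the minimum cost of a Steiner tree for R, i.e., at most twice the minimum over all S with R ⊆ S ⊆ V of the minimum cost of a spanning tree of the complete graph on S. -/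
/-- The cost of a set of edges over a metric space: the sum of the distances `d(u,w)` over its
edges. -/
noncomputable def treeCost {V : Type*} [MetricSpace V] (T : Finset (Sym2 V)) : ℝ :=
  ∑ e ∈ T, Sym2.lift ⟨fun a b => dist a b, fun a b => dist_comm a b⟩ e

/-- `T` is (the edge set of) a spanning tree of the complete graph on the vertex set `S`:
its edges have both endpoints in `S`, it is acyclic, and it connects every two vertices of
`S`. -/
def IsSpanningTreeOn {V : Type*} (S : Finset V) (T : Finset (Sym2 V)) : Prop :=
  (∀ e ∈ T, ∀ x ∈ e, x ∈ S) ∧ (SimpleGraph.fromEdgeSet (↑T : Set (Sym2 V))).IsAcyclic ∧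
    ∀ u ∈ S, ∀ w ∈ S, (SimpleGraph.fromEdgeSet (↑T : Set (Sym2 V))).Reachable u w

/-- The minimum cost of a spanning tree of the complete graph (with edge costs given by the
metric) on the vertex set `S`. -/
noncomputable def mstCost (V : Type*) [MetricSpace V] (S : Finset V) : ℝ :=
  sInf { c : ℝ | ∃ T : Finset (Sym2 V), IsSpanningTreeOn S T ∧ c = treeCost T }

/-!
Let `T` be a minimum spanning tree on some `S ⊇ R`. Walking around `T` and using every edge
twice gives a closed walk through all of `S` of cost `2 · cost T`. Skipping the vertices outside
`R` does not increase the cost, by the triangle inequality, and the edges of the shortened walk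
connect `R`, so they contain a spanning tree on `R`.

The closed walk is built by induction on the edges. If deleting an edge `s(a, b)` leaves `a` and
`b` connected, the edge is not needed. Otherwise it splits off the component of `b`, and the
walk of that component is spliced into the walk of the other side by the detour
`a → b → ⋯ → b → a`.
-/

open SimpleGraph

section

variable {V : Type*}

section Dist

variable [Dist V]

noncomputable def pathCost : List V → ℝ
  | a :: b :: t => dist a b + pathCost (b :: t)
  | _ => 0

@[simp] lemma pathCost_nil : pathCost ([] : List V) = 0 := rfl

@[simp] lemma pathCost_singleton (a : V) : pathCost [a] = 0 := rfl

@[simp] lemma pathCost_cons_cons (a b : V) (t : List V) :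
    pathCost (a :: b :: t) = dist a b + pathCost (b :: t) := rfl

lemma pathCost_append_cons (l : List V) (b : V) (s : List V) :
    pathCost (l ++ b :: s) = pathCost (l ++ [b]) + pathCost (b :: s) := by
  induction l with
  | nil => simp
  | cons a t ih =>
    cases t with
    | nil => simp
    | cons c t =>
      simp only [List.cons_append, pathCost_cons_cons] at ih ⊢
      rw [ih, add_assoc]

lemma pathCost_insert_loop (A : List V) (a : V) (D B : List V) :
    pathCost (A ++ a :: (D ++ a :: B)) = pathCost (A ++ a :: B) + pathCost (a :: D ++ [a]) := by
  rw [pathCost_append_cons A a, pathCost_append_cons A a B, ← List.cons_append,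
    pathCost_append_cons (a :: D) a B]
  ring

end Dist

section PseudoMetric

variable [PseudoMetricSpace V]

lemma pathCost_cons_le (a b : V) (l : List V) :
    pathCost (a :: l) ≤ dist a b + pathCost (b :: l) := by
  cases l with
  | nil => simp
  | cons c l =>
    simp only [pathCost_cons_cons]
    linarith [dist_triangle a b c]

lemma pathCost_cons_le_of_sublist {l₁ l₂ : List V} (h : l₁.Sublist l₂) (a : V) :
    pathCost (a :: l₁) ≤ pathCost (a :: l₂) := by
  induction h generalizing a with
  | slnil => rfl
  | cons b _ ih =>
    rw [pathCost_cons_cons]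
    exact (pathCost_cons_le a b _).trans (add_le_add_right (ih b) _)
  | cons_cons b _ ih =>
    simp only [pathCost_cons_cons]
    exact add_le_add_right (ih b) _

lemma pathCost_detour (a b : V) (t : List V) :
    pathCost (a :: (b :: t ++ [b]) ++ [a]) = 2 * dist a b + pathCost (b :: t ++ [b]) := by
  have h := pathCost_append_cons (a :: b :: t) b [a]
  simp only [List.cons_append, List.append_assoc, List.nil_append, pathCost_cons_cons,
    pathCost_singleton] at h ⊢
  rw [h, dist_comm b a]
  ring

lemma exists_insert_loop {x a : V} {t : List V} (ha : a ∈ x :: t) (D : List V) :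
    ∃ t', (∀ v ∈ x :: t, v ∈ x :: t') ∧ (∀ v ∈ D, v ∈ t') ∧
      pathCost (x :: t' ++ [x]) = pathCost (x :: t ++ [x]) + pathCost (a :: D ++ [a]) := by
  rcases List.mem_cons.mp ha with rfl | ha
  · refine ⟨t ++ a :: D, by simp +contextual, by simp +contextual, ?_⟩
    have h := pathCost_append_cons (a :: t) a (D ++ [a])
    simp only [List.cons_append, List.append_assoc] at h ⊢
    exact h
  · obtain ⟨A, B, rfl⟩ := List.append_of_mem ha
    refine ⟨A ++ a :: (D ++ a :: B), by simp +contextual; tauto, by simp +contextual, ?_⟩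
    have h := pathCost_insert_loop (x :: A) a D (B ++ [x])
    simp only [List.cons_append, List.append_assoc] at h ⊢
    exact h

end PseudoMetric

namespace SimpleGraph

variable {G : SimpleGraph V} {a b u v : V}

lemma reachable_sup_edge_iff : (G ⊔ edge a b).Reachable u v ↔
    G.Reachable u v ∨ G.Reachable u a ∧ G.Reachable b v ∨ G.Reachable u b ∧ G.Reachable a v := by
  constructor
  · rintro ⟨p⟩
    induction p with
    | nil => exact Or.inl .rfl
    | cons h _ ih =>
      rcases (sup_adj _ _ _ _).mp h with h | h
      · rcases ih with h' | ⟨h₁, h₂⟩ | ⟨h₁, h₂⟩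
        exacts [Or.inl (h.reachable.trans h'), Or.inr (Or.inl ⟨h.reachable.trans h₁, h₂⟩),
          Or.inr (Or.inr ⟨h.reachable.trans h₁, h₂⟩)]
      · obtain ⟨⟨rfl, rfl⟩ | ⟨rfl, rfl⟩, -⟩ := (edge_adj _ _ _ _).mp h
        · rcases ih with h' | ⟨h₁, h₂⟩ | ⟨-, h₂⟩
          exacts [Or.inr (Or.inl ⟨.rfl, h'⟩), Or.inl (h₁.symm.trans h₂), Or.inl h₂]
        · rcases ih with h' | ⟨-, h₂⟩ | ⟨h₁, h₂⟩
          exacts [Or.inr (Or.inr ⟨.rfl, h'⟩), Or.inl h₂, Or.inl (h₁.symm.trans h₂)]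
  · have hab : (G ⊔ edge a b).Reachable a b := by
      by_cases h : a = b
      · exact h ▸ .rfl
      · exact Adj.reachable (Or.inr ((edge_adj _ _ _ _).mpr ⟨Or.inl ⟨rfl, rfl⟩, h⟩))
    have hle := fun {x y : V} (h : G.Reachable x y) => h.mono (le_sup_left (b := edge a b))
    rintro (h | ⟨h₁, h₂⟩ | ⟨h₁, h₂⟩)
    exacts [hle h, (hle h₁).trans (hab.trans (hle h₂)),
      (hle h₁).trans (hab.symm.trans (hle h₂))]

lemma Reachable.of_sup_edge (hab : G.Reachable a b) (h : (G ⊔ edge a b).Reachable u v) :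
    G.Reachable u v := by
  rcases reachable_sup_edge_iff.mp h with h | ⟨h₁, h₂⟩ | ⟨h₁, h₂⟩
  exacts [h, h₁.trans (hab.trans h₂), h₁.trans (hab.symm.trans h₂)]

lemma fromEdgeSet_eq_erase_sup_edge [DecidableEq V] {T : Finset (Sym2 V)} (h : s(a, b) ∈ T) :
    fromEdgeSet (T : Set (Sym2 V)) = fromEdgeSet ↑(T.erase s(a, b)) ⊔ edge a b := by
  rw [edge, ← fromEdgeSet_union, Finset.coe_erase, Set.sdiff_union_self,
    Set.union_eq_self_of_subset_right (Set.singleton_subset_iff.mpr h)]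

open Classical in
noncomputable def componentEdges (T : Finset (Sym2 V)) (a : V) : Finset (Sym2 V) :=
  T.filter fun e => ∀ v ∈ e, (fromEdgeSet (T : Set (Sym2 V))).Reachable a v

lemma componentEdges_subset (T : Finset (Sym2 V)) (a : V) : componentEdges T a ⊆ T := by
  classical
  exact Finset.filter_subset _ _

lemma reachable_componentEdges {T : Finset (Sym2 V)}
    (hu : (fromEdgeSet (T : Set (Sym2 V))).Reachable a u)
    (hv : (fromEdgeSet (T : Set (Sym2 V))).Reachable a v) :
    (fromEdgeSet ↑(componentEdges T a)).Reachable u v := by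
  classical
  obtain ⟨p⟩ := hu.symm.trans hv
  refine ⟨p.transfer _ fun e he => ?_⟩
  have he' := p.edges_subset_edgeSet he
  rw [edgeSet_fromEdgeSet] at he' ⊢
  refine ⟨?_, he'.2⟩
  simp only [componentEdges, Finset.coe_filter, Set.mem_ofPred_eq]
  exact ⟨he'.1, fun w hw => hu.trans ⟨p.takeUntil w (Walk.mem_support_of_mem_edges he hw)⟩⟩

lemma disjoint_componentEdges {T : Finset (Sym2 V)}
    (hab : ¬ (fromEdgeSet (T : Set (Sym2 V))).Reachable a b) :
    Disjoint (componentEdges T a) (componentEdges T b) := by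
  refine Finset.disjoint_left.mpr fun e hea heb => ?_
  induction e using Sym2.ind with
  | _ v w =>
    simp only [componentEdges, Finset.mem_filter] at hea heb
    exact hab ((hea.2 v (Sym2.mem_mk_left v w)).trans (heb.2 v (Sym2.mem_mk_left v w)).symm)

end SimpleGraph

section DecidableEq

variable [DecidableEq V]

def pathEdges : List V → Finset (Sym2 V)
  | a :: b :: t => insert s(a, b) (pathEdges (b :: t))
  | _ => ∅

lemma mem_of_mem_pathEdges {l : List V} {e : Sym2 V} (he : e ∈ pathEdges l) {v : V}
    (hv : v ∈ e) : v ∈ l := by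
  induction l with
  | nil => simp [pathEdges] at he
  | cons a t ih =>
    cases t with
    | nil => simp [pathEdges] at he
    | cons b t =>
      rcases Finset.mem_insert.mp he with rfl | he
      · rcases Sym2.mem_iff.mp hv with rfl | rfl <;> simp
      · exact List.mem_cons_of_mem a (ih he)

lemma reachable_pathEdges (a : V) (t : List V) {v : V} (hv : v ∈ a :: t) :
    (fromEdgeSet (pathEdges (a :: t) : Set (Sym2 V))).Reachable a v := by
  induction t generalizing a with
  | nil => exact List.mem_singleton.mp hv ▸ .rfl
  | cons b t ih =>
    have hmono : fromEdgeSet (pathEdges (b :: t) : Set (Sym2 V)) ≤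
        fromEdgeSet (pathEdges (a :: b :: t) : Set (Sym2 V)) :=
      fromEdgeSet_mono (Finset.coe_subset.mpr (Finset.subset_insert _ _))
    have hab : (fromEdgeSet (pathEdges (a :: b :: t) : Set (Sym2 V))).Reachable a b := by
      by_cases h : a = b
      · exact h ▸ .rfl
      · exact Adj.reachable ((fromEdgeSet_adj _).mpr ⟨Finset.mem_insert_self _ _, h⟩)
    rcases List.mem_cons.mp hv with rfl | hv
    · exact .rfl
    · exact hab.trans ((ih b hv).mono hmono)

lemma exists_isSpanningTreeOn_subset {S : Finset V} {U : Finset (Sym2 V)}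
    (hU : ∀ e ∈ U, ∀ v ∈ e, v ∈ S)
    (hconn : ∀ u ∈ S, ∀ w ∈ S, (fromEdgeSet (U : Set (Sym2 V))).Reachable u w) :
    ∃ T ⊆ U, IsSpanningTreeOn S T := by
  induction U using Finset.strongInduction with
  | H U IH =>
  by_cases hac : (fromEdgeSet (U : Set (Sym2 V))).IsAcyclic
  · exact ⟨U, subset_rfl, hU, hac, hconn⟩
  simp only [isAcyclic_iff_forall_isBridge, not_forall] at hac
  obtain ⟨e, he, hbr⟩ := hac
  induction e using Sym2.ind with
  | _ a b =>
  have heU : s(a, b) ∈ U := by simpa using (edgeSet_fromEdgeSet _ ▸ he).1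
  have hab : (fromEdgeSet ↑(U.erase s(a, b))).Reachable a b := by
    simpa [isBridge_iff] using hbr
  obtain ⟨T, hTU, hT⟩ := IH _ (Finset.erase_ssubset heU)
    (fun e he => hU e (Finset.mem_of_mem_erase he))
    fun u hu w hw => Reachable.of_sup_edge hab
      (by rw [← fromEdgeSet_eq_erase_sup_edge heU]; exact hconn u hu w hw)
  exact ⟨T, hTU.trans (Finset.erase_subset _ _), hT⟩

lemma exists_isSpanningTreeOn (S : Finset V) : ∃ T, IsSpanningTreeOn S T := by
  obtain ⟨T, -, hT⟩ := exists_isSpanningTreeOn_subset (U := S.sym2)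
    (fun e he => Finset.mem_sym2_iff.mp he) fun u hu w hw => by
      by_cases h : u = w
      · exact h ▸ .rfl
      · exact Adj.reachable ((fromEdgeSet_adj _).mpr ⟨Finset.mk_mem_sym2_iff.mpr ⟨hu, hw⟩, h⟩)
  exact ⟨T, hT⟩

end DecidableEq

section Metric

variable [MetricSpace V]

lemma lift_dist_nonneg (e : Sym2 V) :
    0 ≤ Sym2.lift ⟨fun a b => Dist.dist a b, fun a b => dist_comm a b⟩ e := by
  induction e using Sym2.ind with
  | _ a b => exact dist_nonneg

lemma treeCost_nonneg (T : Finset (Sym2 V)) : 0 ≤ treeCost T :=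
  Finset.sum_nonneg fun e _ => lift_dist_nonneg e

lemma treeCost_mono {T T' : Finset (Sym2 V)} (h : T ⊆ T') : treeCost T ≤ treeCost T' :=
  Finset.sum_le_sum_of_subset_of_nonneg h fun e _ _ => lift_dist_nonneg e

lemma treeCost_erase_add [DecidableEq V] {T : Finset (Sym2 V)} {a b : V} (h : s(a, b) ∈ T) :
    treeCost (T.erase s(a, b)) + dist a b = treeCost T :=
  Finset.sum_erase_add T _ h

lemma treeCost_insert_le [DecidableEq V] (T : Finset (Sym2 V)) (a b : V) :
    treeCost (insert s(a, b) T) ≤ dist a b + treeCost T := by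
  by_cases h : s(a, b) ∈ T
  · rw [Finset.insert_eq_of_mem h]
    linarith [dist_nonneg (x := a) (y := b)]
  · exact (Finset.sum_insert h).le

lemma treeCost_componentEdges_add_le {T : Finset (Sym2 V)} {a b : V}
    (hab : ¬ (fromEdgeSet (T : Set (Sym2 V))).Reachable a b) :
    treeCost (componentEdges T a) + treeCost (componentEdges T b) ≤ treeCost T := by
  classical
  rw [treeCost, treeCost, ← Finset.sum_union (disjoint_componentEdges hab)]
  exact treeCost_mono (Finset.union_subset (componentEdges_subset T a) (componentEdges_subset T b))

theorem exists_tour [DecidableEq V] (T : Finset (Sym2 V)) (x : V) :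
    ∃ t : List V, (∀ v, (fromEdgeSet (T : Set (Sym2 V))).Reachable x v → v ∈ x :: t) ∧
      pathCost (x :: t ++ [x]) ≤ 2 * treeCost T := by
  induction T using Finset.strongInduction generalizing x with
  | H T IH =>
  rcases T.eq_empty_or_nonempty with rfl | ⟨e, he⟩
  · refine ⟨[], fun v hv => ?_, by simp [treeCost]⟩
    simp only [Finset.coe_empty, fromEdgeSet_empty, reachable_bot] at hv
    simp [hv]
  induction e using Sym2.ind with
  | _ a b =>
  by_cases hsplit : ¬ (fromEdgeSet ↑(T.erase s(a, b))).Reachable a b ∧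
      ((fromEdgeSet ↑(T.erase s(a, b))).Reachable x a ∨
        (fromEdgeSet ↑(T.erase s(a, b))).Reachable x b)
  · obtain ⟨hab, hx⟩ := hsplit
    wlog hxa : (fromEdgeSet (↑(T.erase s(a, b)) : Set (Sym2 V))).Reachable x a generalizing a b
    · rw [Sym2.eq_swap] at he hab hx hxa
      exact this b a he (fun h => hab h.symm) hx.symm (hx.resolve_left hxa)
    have hsub : ∀ c, componentEdges (T.erase s(a, b)) c ⊂ T := fun c =>
      (componentEdges_subset _ c).trans_ssubset (Finset.erase_ssubset he)
    obtain ⟨ta, hta, hca⟩ := IH _ (hsub a) x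
    obtain ⟨tb, htb, hcb⟩ := IH _ (hsub b) b
    have hcompa : ∀ v, (fromEdgeSet ↑(T.erase s(a, b))).Reachable a v → v ∈ x :: ta :=
      fun v hv => hta v (reachable_componentEdges hxa.symm hv)
    have hcompb : ∀ v, (fromEdgeSet ↑(T.erase s(a, b))).Reachable b v → v ∈ b :: tb :=
      fun v hv => htb v (reachable_componentEdges .rfl hv)
    obtain ⟨t, hta', htb', hcost⟩ := exists_insert_loop (hcompa a .rfl) (b :: tb ++ [b])
    refine ⟨t, fun v hv => ?_, ?_⟩
    · rw [fromEdgeSet_eq_erase_sup_edge he] at hv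
      rcases reachable_sup_edge_iff.mp hv with h | ⟨-, h⟩ | ⟨h, -⟩
      · exact hta' v (hcompa v (hxa.symm.trans h))
      · exact List.mem_cons_of_mem x (htb' v (List.mem_append_left _ (hcompb v h)))
      · exact absurd (hxa.symm.trans h) hab
    · rw [hcost, pathCost_detour]
      linarith [treeCost_componentEdges_add_le hab, treeCost_erase_add he]
  · obtain ⟨t, hcov, hcost⟩ := IH _ (Finset.erase_ssubset he) x
    refine ⟨t, fun v hv => hcov v ?_, hcost.trans ?_⟩
    · rw [fromEdgeSet_eq_erase_sup_edge he] at hv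
      rcases reachable_sup_edge_iff.mp hv with h | ⟨h₁, h₂⟩ | ⟨h₁, h₂⟩
      exacts [h, h₁.trans ((Classical.byContradiction fun hab => hsplit ⟨hab, .inl h₁⟩).trans h₂),
        h₁.trans ((Classical.byContradiction fun hab => hsplit ⟨hab, .inr h₁⟩).symm.trans h₂)]
    · linarith [treeCost_mono (Finset.erase_subset s(a, b) T)]

lemma treeCost_pathEdges_le [DecidableEq V] (l : List V) :
    treeCost (pathEdges l) ≤ pathCost l := by
  induction l with
  | nil => simp [pathEdges, treeCost]
  | cons a t ih =>
    cases t with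
    | nil => simp [pathEdges, treeCost]
    | cons b t =>
      rw [pathEdges, pathCost_cons_cons]
      exact (treeCost_insert_le _ a b).trans (add_le_add_right ih _)

lemma mstCost_le_treeCost [DecidableEq V] {S : Finset V} {U : Finset (Sym2 V)}
    (hU : ∀ e ∈ U, ∀ v ∈ e, v ∈ S)
    (hconn : ∀ u ∈ S, ∀ w ∈ S, (fromEdgeSet (U : Set (Sym2 V))).Reachable u w) :
    mstCost V S ≤ treeCost U := by
  obtain ⟨T, hTU, hT⟩ := exists_isSpanningTreeOn_subset hU hconn
  have hbdd : BddBelow {c : ℝ | ∃ T : Finset (Sym2 V), IsSpanningTreeOn S T ∧ c = treeCost T} :=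
    ⟨0, by rintro c ⟨T, -, rfl⟩; exact treeCost_nonneg T⟩
  exact (csInf_le hbdd ⟨T, hT, rfl⟩).trans (treeCost_mono hTU)

lemma mstCost_le_two_mul_treeCost [DecidableEq V] {R : Finset V} {T : Finset (Sym2 V)}
    (hT : ∀ u ∈ R, ∀ w ∈ R, (fromEdgeSet (T : Set (Sym2 V))).Reachable u w) :
    mstCost V R ≤ 2 * treeCost T := by
  rcases R.eq_empty_or_nonempty with rfl | ⟨r, hr⟩
  · exact (mstCost_le_treeCost (U := ∅) (by simp) (by simp)).trans
      (by simpa [treeCost] using treeCost_nonneg T)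
  obtain ⟨t, hcov, hcost⟩ := exists_tour T r
  set l := (t ++ [r]).filter (· ∈ R)
  have hmem : ∀ v ∈ r :: l, v ∈ R := by
    intro v hv
    simp only [l, List.mem_cons, List.mem_filter, decide_eq_true_eq] at hv
    rcases hv with rfl | ⟨-, hv⟩
    exacts [hr, hv]
  have hcovR : ∀ v ∈ R, v ∈ r :: l := fun v hv => by
    rcases List.mem_cons.mp (hcov v (hT r hr v hv)) with rfl | h
    · exact List.mem_cons_self
    · simp [l, h, hv]
  calc mstCost V R ≤ treeCost (pathEdges (r :: l)) :=
        mstCost_le_treeCost (fun e he v hv => hmem v (mem_of_mem_pathEdges he hv))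
          fun u hu w hw => ((reachable_pathEdges r l (hcovR u hu)).symm.trans
            (reachable_pathEdges r l (hcovR w hw)))
    _ ≤ pathCost (r :: l) := treeCost_pathEdges_le _
    _ ≤ pathCost (r :: t ++ [r]) := pathCost_cons_le_of_sublist List.filter_sublist r
    _ ≤ 2 * treeCost T := hcost

lemma mstCost_le_two_mul_mstCost {R S : Finset V} (hRS : R ⊆ S) :
    mstCost V R ≤ 2 * mstCost V S := by
  classical
  rw [← div_le_iff₀' two_pos]
  obtain ⟨T, hT⟩ := exists_isSpanningTreeOn S
  refine le_csInf ⟨_, T, hT, rfl⟩ ?_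
  rintro c ⟨T, hT, rfl⟩
  rw [div_le_iff₀' two_pos]
  exact mstCost_le_two_mul_treeCost fun u hu w hw => hT.2.2 u (hRS hu) w (hRS hw)

end Metric

end

theorem mst_le_two_mul_steiner_general (V : Type*) [MetricSpace V]
    (R : Finset V) :
    mstCost V R ≤ 2 * sInf { c : ℝ | ∃ S : Finset V, R ⊆ S ∧ c = mstCost V S } := by
  rw [← div_le_iff₀' two_pos]
  refine le_csInf ⟨_, R, subset_rfl, rfl⟩ ?_
  rintro c ⟨S, hRS, rfl⟩
  rw [div_le_iff₀' two_pos]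
  exact mstCost_le_two_mul_mstCost hRS

/-- In a finite metric space, for any nonempty terminal set `R`, the minimum cost of a spanning
tree on `R` is at most twice the minimum cost of a Steiner tree for `R`, i.e. at most twice
the minimum over all `S ⊇ R` of the minimum spanning tree cost on `S`. -/
theorem mst_le_two_mul_steiner (V : Type*) [MetricSpace V] [Fintype V]
    (R : Finset V) (hR : R.Nonempty) :
    mstCost V R ≤ 2 * sInf { c : ℝ | ∃ S : Finset V, R ⊆ S ∧ c = mstCost V S } :=
  mst_le_two_mul_steiner_general V R
end
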